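/- Let γ > 0, let A ∈ ℝ^{n×n}, B ∈ ℝ^{n×m}, C ∈ ℝ^{r×n}, D ∈ ℝ^{r×m}, and let P be a symmetric n×n real matrix such that the symmetric block matrix M(P) = [[AᵀP + PA, PB, Cᵀ],[BᵀP, −γI, Dᵀ],[C, D, −γI]] is negative definite. Then for all x ∈ ℝⁿ and w ∈ ℝᵐ with (x, w) ≠ (0, 0), one has 2·xᵀP(Ax + Bw) + γ⁻¹·‖Cx + Dw‖² − γ·‖w‖² < 0, where ‖·‖ is the Euclidean norm. -/

import Mathlib

/-!
Evaluate the quadratic form of `M(P)` at `(x, w, z)` with `z = γ⁻¹ (Cx + Dw)`, the maximiser of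
the form in the last block variable (the Schur-complement step). Using `Pᵀ = P`, its value there is
exactly the left-hand side of the dissipation inequality, and `(x, w, z) ≠ 0` as soon as
`(x, w) ≠ 0`.
-/

open Matrix

/-- A real matrix is negative definite (in the quadratic-form sense):
`yᵀ M y < 0` for all nonzero real vectors `y`. -/
def Matrix.NegDefR {ι : Type*} [Fintype ι] (M : Matrix ι ι ℝ) : Prop :=
  ∀ y : ι → ℝ, y ≠ 0 → y ⬝ᵥ M *ᵥ y < 0

theorem Matrix.sumElim_dotProduct_fromBlocks_mulVec_sumElim {l m n o α : Type*} [Fintype l]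
    [Fintype m] [Fintype n] [Fintype o] [NonUnitalNonAssocSemiring α]
    (A : Matrix n l α) (B : Matrix n m α) (C : Matrix o l α) (D : Matrix o m α)
    (u : n → α) (v : o → α) (x : l → α) (y : m → α) :
    Sum.elim u v ⬝ᵥ fromBlocks A B C D *ᵥ Sum.elim x y =
      u ⬝ᵥ A *ᵥ x + u ⬝ᵥ B *ᵥ y + (v ⬝ᵥ C *ᵥ x + v ⬝ᵥ D *ᵥ y) := by
  simp only [fromBlocks_mulVec, Sum.elim_comp_inl, Sum.elim_comp_inr, sumElim_dotProduct_sumElim,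
    dotProduct_add]

section HInfinity

variable {n m r : Type*} [Fintype n] [Fintype m] [Fintype r] [DecidableEq m] [DecidableEq r]

def hInfLMI (γ : ℝ) (A : Matrix n n ℝ) (B : Matrix n m ℝ) (C : Matrix r n ℝ)
    (D : Matrix r m ℝ) (P : Matrix n n ℝ) : Matrix ((n ⊕ m) ⊕ r) ((n ⊕ m) ⊕ r) ℝ :=
  fromBlocks (fromBlocks (Aᵀ * P + P * A) (P * B) (Bᵀ * P) (-(γ • 1))) (fromRows Cᵀ Dᵀ)
    (fromCols C D) (-(γ • 1))

noncomputable def hInfDissipation (γ : ℝ) (A : Matrix n n ℝ) (B : Matrix n m ℝ)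
    (C : Matrix r n ℝ) (D : Matrix r m ℝ) (P : Matrix n n ℝ) (x : n → ℝ) (w : m → ℝ) : ℝ :=
  2 * (x ⬝ᵥ P *ᵥ (A *ᵥ x + B *ᵥ w)) + γ⁻¹ * ((C *ᵥ x + D *ᵥ w) ⬝ᵥ (C *ᵥ x + D *ᵥ w)) -
    γ * (w ⬝ᵥ w)

theorem dotProduct_hInfLMI_mulVec {γ : ℝ} (hγ : γ ≠ 0) (A : Matrix n n ℝ) (B : Matrix n m ℝ)
    (C : Matrix r n ℝ) (D : Matrix r m ℝ) {P : Matrix n n ℝ} (hP : Pᵀ = P) (x : n → ℝ)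
    (w : m → ℝ) :
    let y := Sum.elim (Sum.elim x w) (γ⁻¹ • (C *ᵥ x + D *ᵥ w))
    y ⬝ᵥ hInfLMI γ A B C D P *ᵥ y = hInfDissipation γ A B C D P x w := by
  have hBP : Bᵀ * P = (P * B)ᵀ := by rw [transpose_mul, hP]
  have hAP : Aᵀ * P = (P * A)ᵀ := by rw [transpose_mul, hP]
  simp only [hInfLMI, hInfDissipation, sumElim_dotProduct_fromBlocks_mulVec_sumElim,
    fromRows_mulVec, fromCols_mulVec_sumElim, sumElim_dotProduct_sumElim, hAP, hBP,
    dotProduct_transpose_mulVec, add_mulVec, ← mulVec_mulVec, mulVec_add, dotProduct_add,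
    neg_mulVec, smul_mulVec, one_mulVec, dotProduct_neg, dotProduct_smul,
    smul_dotProduct, smul_eq_mul]
  field_simp
  ring

theorem hInfDissipation_neg {γ : ℝ} (hγ : γ ≠ 0) {A : Matrix n n ℝ} {B : Matrix n m ℝ}
    {C : Matrix r n ℝ} {D : Matrix r m ℝ} {P : Matrix n n ℝ} (hP : Pᵀ = P)
    (hM : (hInfLMI γ A B C D P).NegDefR) {x : n → ℝ} {w : m → ℝ} (hxw : ¬(x = 0 ∧ w = 0)) :
    hInfDissipation γ A B C D P x w < 0 := by
  have hy : Sum.elim (Sum.elim x w) (γ⁻¹ • (C *ᵥ x + D *ᵥ w)) ≠ 0 := fun h =>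
    hxw ⟨funext fun i => congrFun h (.inl (.inl i)), funext fun j => congrFun h (.inl (.inr j))⟩
  simpa only [dotProduct_hInfLMI_mulVec hγ A B C D hP x w] using hM _ hy

end HInfinity

/-- If the H∞ analysis LMI matrix
`M(P) = [[AᵀP + PA, PB, Cᵀ],[BᵀP, −γI, Dᵀ],[C, D, −γI]]` is negative definite (with `P`
symmetric, `γ > 0`), then for all `(x, w) ≠ (0, 0)` the dissipation inequality
`2 xᵀP(Ax + Bw) + γ⁻¹ ‖Cx + Dw‖² − γ ‖w‖² < 0` holds (`‖·‖` the Euclidean norm, squared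
norms written as dot products). -/
theorem stmt_10 (n m r : ℕ) (γ : ℝ) (hγ : 0 < γ)
    (A : Matrix (Fin n) (Fin n) ℝ) (B : Matrix (Fin n) (Fin m) ℝ)
    (C : Matrix (Fin r) (Fin n) ℝ) (D : Matrix (Fin r) (Fin m) ℝ)
    (P : Matrix (Fin n) (Fin n) ℝ) (hPsymm : Pᵀ = P)
    (hM : (fromBlocks
        (fromBlocks (Aᵀ * P + P * A) (P * B) (Bᵀ * P)
          (-(γ • (1 : Matrix (Fin m) (Fin m) ℝ))))
        (fromRows Cᵀ Dᵀ)
        (fromCols C D)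
        (-(γ • (1 : Matrix (Fin r) (Fin r) ℝ)))).NegDefR) :
    ∀ (x : Fin n → ℝ) (w : Fin m → ℝ), ¬(x = 0 ∧ w = 0) →
      2 * (x ⬝ᵥ P *ᵥ (A *ᵥ x + B *ᵥ w)) +
          γ⁻¹ * ((C *ᵥ x + D *ᵥ w) ⬝ᵥ (C *ᵥ x + D *ᵥ w)) -
          γ * (w ⬝ᵥ w) < 0 :=
  fun _ _ hxw => hInfDissipation_neg hγ.ne' hPsymm hM hxw
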